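/- arXiv:0810.3232 — 4 statements merged into one kernel-verified Lean document; each statement's English description precedes it below -/
import Mathlib

section
/- Let L_n(x;q) be the q-Laguerre polynomials defined by the recurrence L_{n+1}(x;q) = (x - y[n+1]_q - [n]_q) L_n(x;q) - y [n]_q² L_{n-1}(x;q) with L_0 = 1, L_{-1} = 0. Then L_n(x;q) = Σ_{k=0}^n (-1)^{n-k} (n!_q / k!_q) · qbinom(n,k) · q^{k(k-n)} y^{n-k} · Π_{j=0}^{k-1} (x - (1 - y q^{-j})[j]_q). -/
open Polynomial

/-- The q-integer `[n]_q = 1 + q + ⋯ + q^{n-1}`. -/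
def qInt {K : Type*} [CommRing K] (q : K) (n : ℕ) : K := ∑ i ∈ Finset.range n, q ^ i

/-- The q-factorial `n!_q`. -/
def qFact {K : Type*} [CommRing K] (q : K) (n : ℕ) : K := ∏ j ∈ Finset.range n, qInt q (j + 1)

/-- The Gaussian binomial coefficient. -/
noncomputable def qBinom {K : Type*} [Field K] (q : K) (n k : ℕ) : K :=
  qFact q n / (qFact q k * qFact q (n - k))

/-- The q-Laguerre polynomials, defined by the three-term recurrence
`L_{n+1} = (x - y[n+1]_q - [n]_q) L_n - y [n]_q² L_{n-1}` with `L_0 = 1`, `L_{-1} = 0`. -/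
noncomputable def qLag {K : Type*} [CommRing K] (y q : K) : ℕ → Polynomial K
  | 0 => 1
  | 1 => X - C (y * qInt q 1 + qInt q 0)
  | n + 2 =>
      (X - C (y * qInt q (n + 2) + qInt q (n + 1))) * qLag y q (n + 1)
        - C (y * (qInt q (n + 1)) ^ 2) * qLag y q n

/-! Write `a_j = (1 - y q^{-j}) [j]_q` and `P_k = ∏_{j<k} (x - a_j)`, so that `x P_k = P_{k+1} + a_k P_k`.
Expanding `L_n = ∑ c(n,k) P_k`, the three-term recurrence for `L_n` becomes a recurrence for the
coefficients `c(n,k)`. The closed form has simple ratios `c(n+1,k) / c(n,k)` and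
`c(n,k+1) / c(n,k)`, and with these every term of the coefficient recurrence is a multiple of
`c(n+1,k)`; what remains is a polynomial identity between q-integers. -/

section QInt
variable {R : Type*} [CommRing R] (q : R)

lemma qInt_zero : qInt q 0 = 0 := Finset.sum_range_zero _

lemma qInt_add (a b : ℕ) : qInt q (a + b) = qInt q a + q ^ a * qInt q b := by
  simp only [qInt, Finset.sum_range_add, Finset.mul_sum, pow_add]

lemma qInt_mul_sub_one (m : ℕ) : qInt q m * (q - 1) = q ^ m - 1 := geom_sum_mul q m

lemma qFact_succ (m : ℕ) : qFact q (m + 1) = qFact q m * qInt q (m + 1) :=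
  Finset.prod_range_succ _ _

lemma qFact_ne_zero [IsDomain R] (hroot : ∀ m : ℕ, 0 < m → qInt q m ≠ 0) (m : ℕ) :
    qFact q m ≠ 0 :=
  Finset.prod_ne_zero_iff.2 fun j _ => hroot (j + 1) j.succ_pos

/-- The coefficient recurrence of `qLagCoeff.succ_succ` with `n + 1 = k + e`, divided by
`c(n+1,k) q^k`. -/
lemma qInt_laguerre_identity (y : R) (k e : ℕ) :
    y * qInt q (k + e + 1) ^ 2 =
      y * q ^ (e + 1) * qInt q k ^ 2
        - ((q ^ k - y) * qInt q k - q ^ k * (y * qInt q (k + e + 1) + qInt q (k + e)))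
          * qInt q (e + 1)
        - qInt q e * qInt q (e + 1) * q ^ (2 * k) := by
  rw [add_assoc, qInt_add q k (e + 1), qInt_add q k e]
  linear_combination (y * qInt q k ^ 2) * qInt_mul_sub_one q (e + 1)
    - (y * qInt q k * qInt q (e + 1)) * qInt_mul_sub_one q k

end QInt

lemma Finset.sum_range_succ_shift {R M : Type*} [Semiring R] [AddCommMonoid M] [Module R M]
    (f : ℕ → R) (P : ℕ → M) (N : ℕ) (hf : f N = 0) :
    ∑ k ∈ Finset.range (N + 1), f k • P (k + 1) =
      ∑ k ∈ Finset.range (N + 1), (if k = 0 then 0 else f (k - 1)) • P k := by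
  rw [Finset.sum_range_succ, hf, zero_smul, add_zero, Finset.sum_range_succ']
  simp

section QLaguerre
variable {K : Type*} [Field K]

noncomputable def qLagCoeff (y q : K) (m k : ℕ) : K :=
  if k ≤ m then
    (-1 : K) ^ (m - k) * (qFact q m / qFact q k) * qBinom q m k *
      q ^ ((k : ℤ) * ((k : ℤ) - (m : ℤ))) * y ^ (m - k)
  else 0

noncomputable def qLagBasis (y q : K) (k : ℕ) : K[X] :=
  ∏ j ∈ Finset.range k, (X - C ((1 - y * q ^ (-(j : ℤ))) * qInt q j))

namespace qLagCoeff
variable (y q : K)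

lemma of_lt {m k : ℕ} (h : m < k) : qLagCoeff y q m k = 0 := if_neg (by omega)

lemma self_add (k d : ℕ) :
    qLagCoeff y q (k + d) k =
      (-1) ^ d * (qFact q (k + d) / qFact q k) ^ 2 / qFact q d * (q ^ (k * d))⁻¹ * y ^ d := by
  rw [qLagCoeff, if_pos (Nat.le_add_right k d), qBinom, Nat.add_sub_cancel_left,
    show (k : ℤ) * (k - (k + d : ℕ)) = -(k * d : ℕ) by push_cast; ring, zpow_neg, zpow_natCast]
  ring

variable {q}

lemma diag (hroot : ∀ m : ℕ, 0 < m → qInt q m ≠ 0) (m : ℕ) : qLagCoeff y q m m = 1 := by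
  have h := self_add y q m 0
  rw [add_zero, div_self (qFact_ne_zero q hroot m)] at h
  simpa [qFact] using h

lemma succ_left_mul_eq (hq : q ≠ 0) (hroot : ∀ m : ℕ, 0 < m → qInt q m ≠ 0) (m k : ℕ) :
    qLagCoeff y q (m + 1) k * (qInt q (m + 1 - k) * q ^ k) =
      -(y * qInt q (m + 1) ^ 2) * qLagCoeff y q m k := by
  rcases lt_or_ge m k with hmk | hkm
  · rw [of_lt y q hmk, Nat.sub_eq_zero_of_le hmk, qInt_zero]
    ring
  obtain ⟨d, rfl⟩ := Nat.exists_eq_add_of_le hkm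
  have hd := hroot (d + 1) d.succ_pos
  rw [show k + d + 1 = k + (d + 1) by ring, self_add, self_add, Nat.add_sub_cancel_left,
    ← add_assoc, qFact_succ q (k + d), qFact_succ q d]
  field_simp
  ring

lemma mul_eq_succ_right (hq : q ≠ 0) (hroot : ∀ m : ℕ, 0 < m → qInt q m ≠ 0) (m k : ℕ) :
    qLagCoeff y q m k * (qInt q (m - k) * q ^ (2 * k + 1)) =
      -(y * q ^ m * qInt q (k + 1) ^ 2) * qLagCoeff y q m (k + 1) := by
  rcases lt_or_ge k m with hkm | hmk
  · obtain ⟨d, rfl⟩ := Nat.exists_eq_add_of_lt hkm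
    have hd := hroot (d + 1) d.succ_pos
    have hk := hroot (k + 1) k.succ_pos
    rw [show k + d + 1 = k + (d + 1) by ring, self_add, Nat.add_sub_cancel_left,
      show k + (d + 1) = k + 1 + d by ring, self_add, qFact_succ q k, qFact_succ q d]
    field_simp
    ring
  · rw [of_lt y q (Nat.lt_succ_of_le hmk), Nat.sub_eq_zero_of_le hmk, qInt_zero]
    ring

lemma succ_succ (hq : q ≠ 0) (hroot : ∀ m : ℕ, 0 < m → qInt q m ≠ 0) (n k : ℕ) :
    qLagCoeff y q (n + 2) k =
      (if k = 0 then 0 else qLagCoeff y q (n + 1) (k - 1))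
        + qLagCoeff y q (n + 1) k *
            ((1 - y * q ^ (-(k : ℤ))) * qInt q k - (y * qInt q (n + 2) + qInt q (n + 1)))
        - y * qInt q (n + 1) ^ 2 * qLagCoeff y q n k := by
  rcases lt_trichotomy k (n + 2) with hk | rfl | hk
  · obtain ⟨e, he⟩ : ∃ e, n + 1 = k + e := Nat.exists_eq_add_of_le (by omega)
    have hT := succ_left_mul_eq y hq hroot (n + 1) k
    have hV := succ_left_mul_eq y hq hroot n k
    rw [show n + 1 + 1 - k = e + 1 by omega, show n + 1 + 1 = n + 2 from rfl] at hT
    rw [show n + 1 - k = e by omega] at hV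
    have hW : (if k = 0 then 0 else qLagCoeff y q (n + 1) (k - 1)) * (qInt q (e + 1) * q ^ (2 * k))
        = -(y * q ^ (k + e + 1) * qInt q k ^ 2) * qLagCoeff y q (n + 1) k := by
      rcases k with _ | j
      · simp [qInt_zero]
      · have h := mul_eq_succ_right y hq hroot (n + 1) j
        rw [show n + 1 - j = e + 1 by omega] at h
        rw [if_neg j.succ_ne_zero, Nat.add_sub_cancel, show j + 1 + e + 1 = n + 1 + 1 by omega]
        linear_combination q * h
    have hid := qInt_laguerre_identity q y k e
    rw [show k + e + 1 = n + 2 by omega, ← he] at hid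
    have hinv : q ^ (-(k : ℤ)) * q ^ k = 1 := by
      rw [zpow_neg, zpow_natCast, inv_mul_cancel₀ (pow_ne_zero k hq)]
    apply mul_right_cancel₀ (mul_ne_zero (hroot (e + 1) e.succ_pos) (pow_ne_zero (2 * k) hq))
    linear_combination q ^ k * hT - hW + qInt q (e + 1) * q ^ (2 * k) * hV
      - qLagCoeff y q (n + 1) k * q ^ k * hid
      + qLagCoeff y q (n + 1) k * y * qInt q k * qInt q (e + 1) * q ^ k * hinv
  · rw [if_neg (by omega), show n + 2 - 1 = n + 1 by omega, diag y hroot, diag y hroot,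
      of_lt y q (Nat.lt_succ_self _), of_lt y q (by omega : n < n + 2)]
    ring
  · rw [if_neg (by omega), of_lt y q hk, of_lt y q (by omega : n + 1 < k - 1),
      of_lt y q (by omega : n + 1 < k), of_lt y q (by omega : n < k)]
    ring

end qLagCoeff

lemma X_mul_qLagBasis (y q : K) (k : ℕ) :
    X * qLagBasis y q k =
      qLagBasis y q (k + 1) + C ((1 - y * q ^ (-(k : ℤ))) * qInt q k) * qLagBasis y q k := by
  rw [qLagBasis, qLagBasis, Finset.prod_range_succ]
  ring

lemma sum_qLagCoeff_range_eq (y q : K) {m N : ℕ} (h : m + 1 ≤ N) :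
    ∑ k ∈ Finset.range (m + 1), C (qLagCoeff y q m k) * qLagBasis y q k =
      ∑ k ∈ Finset.range N, C (qLagCoeff y q m k) * qLagBasis y q k := by
  refine Finset.sum_subset (Finset.range_subset_range.2 h) fun k _ hk => ?_
  rw [qLagCoeff.of_lt y q (by simpa using hk), map_zero, zero_mul]

theorem qLag_eq_sum_qLagCoeff {y q : K} (hq : q ≠ 0) (hroot : ∀ m : ℕ, 0 < m → qInt q m ≠ 0)
    (n : ℕ) :
    qLag y q n = ∑ k ∈ Finset.range (n + 1), C (qLagCoeff y q n k) * qLagBasis y q k := by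
  induction n using Nat.twoStepInduction with
  | zero => simp [qLag, qLagCoeff.diag y hroot, qLagBasis]
  | one =>
    have h : qLagCoeff y q 1 0 = -y := by simpa [qFact, qInt] using qLagCoeff.self_add y q 0 1
    rw [Finset.sum_range_succ, Finset.sum_range_one, h, qLagCoeff.diag y hroot, qLag, qLagBasis,
      qLagBasis, Finset.prod_range_zero, Finset.prod_range_one, qInt_zero]
    simp [qInt, sub_eq_neg_add]
  | more n ih₀ ih₁ =>
    calc qLag y q (n + 2)
        = (X - C (y * qInt q (n + 2) + qInt q (n + 1))) *
              ∑ k ∈ Finset.range (n + 3), C (qLagCoeff y q (n + 1) k) * qLagBasis y q k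
            - C (y * qInt q (n + 1) ^ 2) *
              ∑ k ∈ Finset.range (n + 3), C (qLagCoeff y q n k) * qLagBasis y q k := by
          rw [qLag, ih₀, ih₁, sum_qLagCoeff_range_eq y q (by omega : n + 1 + 1 ≤ n + 3),
            sum_qLagCoeff_range_eq y q (by omega : n + 1 ≤ n + 3)]
      _ = ∑ k ∈ Finset.range (n + 3), (C (qLagCoeff y q (n + 1) k) * qLagBasis y q (k + 1)
            + C (qLagCoeff y q (n + 1) k) * (C ((1 - y * q ^ (-(k : ℤ))) * qInt q k)
                - C (y * qInt q (n + 2) + qInt q (n + 1))) * qLagBasis y q k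
            - C (y * qInt q (n + 1) ^ 2) * C (qLagCoeff y q n k) * qLagBasis y q k) := by
          rw [Finset.mul_sum, Finset.mul_sum, ← Finset.sum_sub_distrib]
          refine Finset.sum_congr rfl fun k _ => ?_
          linear_combination C (qLagCoeff y q (n + 1) k) * X_mul_qLagBasis y q k
      _ = ∑ k ∈ Finset.range (n + 3), C (qLagCoeff y q (n + 2) k) * qLagBasis y q k := by
          have hshift := Finset.sum_range_succ_shift (fun k => C (qLagCoeff y q (n + 1) k))
            (qLagBasis y q) (n + 2) (by rw [qLagCoeff.of_lt y q (by omega), map_zero])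
          simp only [smul_eq_mul] at hshift
          rw [Finset.sum_sub_distrib, Finset.sum_add_distrib, hshift, ← Finset.sum_add_distrib,
            ← Finset.sum_sub_distrib]
          refine Finset.sum_congr rfl fun k _ => ?_
          rw [qLagCoeff.succ_succ y hq hroot]
          simp only [map_add, map_sub, map_mul, apply_ite C, map_zero]
          ring

end QLaguerre

/-- Explicit formula for the q-Laguerre polynomials. -/
theorem stmt3 (K : Type*) [Field K] (y q : K) (hq : q ≠ 0)
    (hroot : ∀ m : ℕ, 0 < m → qInt q m ≠ 0) (n : ℕ) :
    qLag y q n =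
      ∑ k ∈ Finset.range (n + 1),
        C ((-1 : K) ^ (n - k) * (qFact q n / qFact q k) * qBinom q n k *
            q ^ ((k : ℤ) * ((k : ℤ) - (n : ℤ))) * y ^ (n - k)) *
          ∏ j ∈ Finset.range k, (X - C ((1 - y * q ^ (-(j : ℤ))) * qInt q j)) := by
  rw [qLag_eq_sum_qLagCoeff hq hroot]
  refine Finset.sum_congr rfl fun k hk => ?_
  rw [qLagCoeff, if_pos (Nat.lt_succ_iff.mp (Finset.mem_range.mp hk))]
  rfl
end

section
/- The y-version q-Stirling numbers of the second kind have ordinary generating function Σ_{n ≥ k} S_q(n,k,y) t^n = t^k / Π_{i=1}^k (1 - [i]_q t (1 - q^{-i} y)) as formal power series in t. -/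
/-- The y-version q-Stirling numbers of the second kind, defined by the recurrence
`S(n,k) = S(n-1,k-1) + [k]_q (1 - y q^{-k}) S(n-1,k)`. -/
def Sy {K : Type*} [Field K] (y q : K) : ℕ → ℕ → K
  | 0, 0 => 1
  | 0, _ + 1 => 0
  | _ + 1, 0 => 0
  | n + 1, k + 1 =>
      Sy y q n k + qInt q (k + 1) * (1 - y * q ^ (-((k : ℤ) + 1))) * Sy y q n (k + 1)

/-!
Writing `F_k = Σ_n S_q(n,k,y) tⁿ` and `c_k = [k]_q (1 - q^{-k} y)`, the recurrence says exactly
that `F_k (1 - c_k t) = t F_{k-1}`, while `F_0 = 1`; the formula follows by induction on `k`.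
-/

open PowerSeries

namespace Sy

variable {K : Type*} [Field K] (y q : K)

theorem mk_zero : (mk fun n => Sy y q n 0) = 1 := by
  ext (_ | _) <;> simp [Sy, coeff_one]

theorem mk_succ_mul (k : ℕ) :
    (mk fun n => Sy y q n (k + 1)) *
        (1 - C (qInt q (k + 1) * (1 - q ^ (-((k + 1 : ℕ) : ℤ)) * y)) * X)
      = X * mk fun n => Sy y q n k := by
  ext (_ | n)
  · simp [Sy]
  · rw [mul_sub, mul_one, ← mul_assoc, map_sub, coeff_succ_mul_X, coeff_succ_X_mul]
    simp only [coeff_mk, coeff_mul_C, Sy]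
    push_cast
    ring

end Sy

theorem stmt7_general (K : Type*) [Field K] (y q : K) (k : ℕ) :
    (PowerSeries.mk fun n => Sy y q n k) *
      ∏ i ∈ Finset.Icc 1 k,
        (1 - PowerSeries.C (R := K) (qInt q i * (1 - q ^ (-(i : ℤ)) * y)) * PowerSeries.X)
    = PowerSeries.X ^ k := by
  induction k with
  | zero => simp [Sy.mk_zero]
  | succ k ih =>
    rw [Finset.prod_Icc_succ_top (by omega), ← mul_assoc, mul_right_comm, Sy.mk_succ_mul,
      mul_assoc, ih, pow_succ']

/-- Ordinary generating function of the y-version q-Stirling numbers: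
`Σ_{n} S_q(n,k,y) t^n = t^k / Π_{i=1}^k (1 - [i]_q t (1 - q^{-i} y))`. -/
theorem stmt7 (K : Type*) [Field K] (y q : K) (hq : q ≠ 0) (k : ℕ) :
    (PowerSeries.mk fun n => Sy y q n k) *
      ∏ i ∈ Finset.Icc 1 k,
        (1 - PowerSeries.C (R := K) (qInt q i * (1 - q ^ (-(i : ℤ)) * y)) * PowerSeries.X)
    = PowerSeries.X ^ k :=
  stmt7_general K y q k
end

section
/- Let I(n_1,…,n_k) = Σ_{σ ∈ 𝒟(n_1,…,n_k)} y^{wex(σ)} q^{cr(σ)} denote the generalized-derangement statistic polynomial. Then I(n_1, n_2, …, n_k) = I(n_2, n_3, …, n_k, n_1), i.e., the polynomial is invariant under cyclic shift of the block sizes. -/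
/-- Number of weak excedances of a permutation of `[n]` (0-indexed: `i ≤ σ i`). -/
def wex {n : ℕ} (σ : Equiv.Perm (Fin n)) : ℕ :=
  (Finset.univ.filter (fun i : Fin n => (i : ℕ) ≤ (σ i : ℕ))).card

/-- Number of crossings of a permutation of `[n]`. -/
def cr {n : ℕ} (σ : Equiv.Perm (Fin n)) : ℕ :=
  (∑ i : Fin n,
      (Finset.univ.filter
        (fun j : Fin n => (j : ℕ) < (i : ℕ) ∧ (i : ℕ) ≤ (σ j : ℕ) ∧ (σ j : ℕ) < (σ i : ℕ))).card)
  + ∑ i : Fin n,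
      (Finset.univ.filter
        (fun j : Fin n => (i : ℕ) < (j : ℕ) ∧ (σ j : ℕ) < (i : ℕ) ∧ (σ i : ℕ) < (σ j : ℕ))).card

/-- Index (0-based) of the block of the specification `ns` containing the
(1-based) integer `i`. -/
def blockOf (ns : List ℕ) (i : ℕ) : ℕ :=
  ((List.range ns.length).filter (fun j => (ns.take j).sum < i)).length

/-- `I(n_1,…,n_k) = Σ_{σ ∈ 𝒟(n_1,…,n_k)} y^{wex σ} q^{cr σ}`, the sum of the
statistic over generalized derangements of specification `ns`. -/
def Ipoly {R : Type*} [CommRing R] (y q : R) (ns : List ℕ) : R :=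
  ∑ σ ∈ Finset.univ.filter
      (fun σ : Equiv.Perm (Fin ns.sum) =>
        ∀ i : Fin ns.sum, blockOf ns ((i : ℕ) + 1) ≠ blockOf ns ((σ i : ℕ) + 1)),
    y ^ wex σ * q ^ cr σ

/-!
Conjugation by the cyclic shift `c : i ↦ i + 1 (mod n)` preserves `wex` and `cr`, and conjugation
by `c ^ (n₂ + ⋯ + n_k)` carries the derangements of block sizes `(n₁, …, n_k)` onto those of
`(n₂, …, n_k, n₁)`, since it moves the first block to the end.

For `wex`, the shift only changes comparisons involving the last point `N`: one weak excedance is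
gained at `i = N` and one is lost at `σ i = N`. For `cr`, the shift preserves the crossing
indicator of every pair of arcs unless the pair contains the arc into `N` or the arc out of `N`.
Along these two arcs the change is a difference of the numbers of arcs crossing a cut in the two
directions, which vanishes because `σ` is a bijection.
-/

open Finset Equiv

theorem Equiv.Perm.sum_ite_and_not_apply {α : Type*} [Fintype α] (σ : Perm α) (p : α → Prop)
    [DecidablePred p] :
    ∑ i, (if p i ∧ ¬ p (σ i) then (1 : ℤ) else 0) = ∑ i, (if ¬ p i ∧ p (σ i) then 1 else 0) := by
  have h : ∀ i, (if p i ∧ ¬ p (σ i) then (1 : ℤ) else 0) - (if ¬ p i ∧ p (σ i) then 1 else 0)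
      = (if p i then 1 else 0) - (if p (σ i) then 1 else 0) := by
    intro i; by_cases p i <;> by_cases p (σ i) <;> simp_all
  rw [← sub_eq_zero, ← sum_sub_distrib, sum_congr rfl fun i _ => h i, sum_sub_distrib,
    Equiv.sum_comp σ (fun i => if p i then (1 : ℤ) else 0), sub_self]

theorem sum_sum_eq_of_eq_zero_off_cross {α M : Type*} [Fintype α] [DecidableEq α]
    [AddCommGroup M] (f : α → α → M) (a b : α) (hf : ∀ i j, i ≠ a → j ≠ b → f i j = 0) :
    ∑ i, ∑ j, f i j = ∑ i, f i b + ∑ j, f a j - f a b := by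
  have hrow : ∀ j ∈ univ.erase b, ∑ i, f i j = f a j := fun j hj =>
    sum_eq_single a (fun i _ hi => hf i j hi (ne_of_mem_erase hj)) (by simp)
  calc ∑ i, ∑ j, f i j = ∑ i, (f i b + ∑ j ∈ univ.erase b, f i j) := by
        simp_rw [add_sum_erase univ _ (mem_univ b)]
    _ = ∑ i, f i b + ∑ j ∈ univ.erase b, f a j := by
        rw [sum_add_distrib, sum_comm, sum_congr rfl hrow]
    _ = ∑ i, f i b + ∑ j, f a j - f a b := by
        rw [← add_sum_erase univ (f a) (mem_univ b)]; abel

open Fin.NatCast in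
theorem coe_finRotate_pow (n e : ℕ) (i : Fin n) : ((finRotate n ^ e) i : ℕ) = (i + e) % n := by
  cases n with
  | zero => exact i.elim0
  | succ n =>
    have : (finRotate (n + 1) ^ e) i = i + (e : Fin (n + 1)) := by
      induction e with
      | zero => simp
      | succ e ih => rw [pow_succ', Perm.mul_apply, ih, finRotate_apply, Nat.cast_succ, add_assoc]
    rw [this, Fin.val_add, Fin.val_natCast, Nat.add_mod_mod]

theorem apply_conj_pow_eq {G β : Type*} [Group G] (f : G → β) (c : G)
    (hf : ∀ g, f (c * g * c⁻¹) = f g) (e : ℕ) (g : G) : f (c ^ e * g * (c ^ e)⁻¹) = f g := by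
  induction e with
  | zero => simp
  | succ e ih =>
    calc f (c ^ (e + 1) * g * (c ^ (e + 1))⁻¹) = f (c * (c ^ e * g * (c ^ e)⁻¹) * c⁻¹) := by
          rw [pow_succ']; group
      _ = f g := by rw [hf, ih]

theorem wex_eq_sum {n : ℕ} (σ : Perm (Fin n)) :
    (wex σ : ℤ) = ∑ i : Fin n, if (i : ℕ) ≤ (σ i : ℕ) then 1 else 0 := by
  rw [wex, card_filter]; push_cast; rfl

def crossing {n : ℕ} (i j a b : Fin n) : ℤ :=
  (if (j : ℕ) < i ∧ (i : ℕ) ≤ b ∧ (b : ℕ) < a then 1 else 0)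
  + (if (i : ℕ) < j ∧ (b : ℕ) < i ∧ (a : ℕ) < b then 1 else 0)

theorem cr_eq_sum_crossing {n : ℕ} (σ : Perm (Fin n)) :
    (cr σ : ℤ) = ∑ i, ∑ j, crossing i j (σ i) (σ j) := by
  simp only [cr, crossing, card_filter, sum_add_distrib]
  push_cast
  rfl

section Rotation

variable {n : ℕ} (σ : Perm (Fin (n + 1)))

theorem wex_conj_finRotate :
    wex (finRotate (n + 1) * σ * (finRotate (n + 1))⁻¹) = wex σ := by
  set c := finRotate (n + 1)
  have hpt : ∀ i, (if (c i : ℕ) ≤ (c (σ i) : ℕ) then (1 : ℤ) else 0)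
      = (if (i : ℕ) ≤ (σ i : ℕ) then 1 else 0) + (if i = Fin.last n then 1 else 0)
        - (if σ i = Fin.last n then 1 else 0) := by
    intro i
    have := i.isLt; have := (σ i).isLt
    simp only [c, coe_finRotate, Fin.ext_iff, Fin.val_last]
    split_ifs <;> omega
  rw [← Nat.cast_inj (R := ℤ), wex_eq_sum, wex_eq_sum, ← Equiv.sum_comp c]
  simp only [Perm.mul_apply, Perm.coe_inv, symm_apply_apply, hpt, sum_sub_distrib, sum_add_distrib,
    Equiv.sum_comp σ (fun i => if i = Fin.last n then (1 : ℤ) else 0)]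
  ring

theorem crossing_finRotate {i j a b : Fin (n + 1)} (hj : j ≠ Fin.last n) (ha : a ≠ Fin.last n) :
    crossing (finRotate _ i) (finRotate _ j) (finRotate _ a) (finRotate _ b)
      = crossing i j a b := by
  have := i.isLt; have := j.isLt; have := a.isLt; have := b.isLt
  simp only [crossing, coe_finRotate, ne_eq, Fin.ext_iff, Fin.val_last] at hj ha ⊢
  grind

def crossingDefect (i j : Fin (n + 1)) : ℤ :=
  crossing (finRotate _ i) (finRotate _ j) (finRotate _ (σ i)) (finRotate _ (σ j))
    - crossing i j (σ i) (σ j)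

theorem crossingDefect_eq_zero {i j : Fin (n + 1)} (hi : σ i ≠ Fin.last n)
    (hj : j ≠ Fin.last n) : crossingDefect σ i j = 0 := by
  rw [crossingDefect, crossing_finRotate hj hi, sub_self]

theorem crossingDefect_last_eq {z w : Fin (n + 1)} (hz : σ (Fin.last n) = z)
    (hw : σ w = Fin.last n) (i : Fin (n + 1)) :
    crossingDefect σ i (Fin.last n)
      = (if (i : ℕ) ≤ z ∧ ¬ (σ i : ℕ) ≤ z then 1 else 0)
        - (if ¬ (i : ℕ) ≤ z ∧ (σ i : ℕ) ≤ z then 1 else 0)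
        - (if i = w then if (w : ℕ) ≤ z then 1 else 0 else 0)
        + (if i = Fin.last n then 1 else 0) := by
  have h1 : σ i = Fin.last n ↔ i = w := by rw [← hw, σ.injective.eq_iff]
  have h2 : σ i = z ↔ i = Fin.last n := by rw [← hz, σ.injective.eq_iff]
  have := i.isLt; have := (σ i).isLt; have := w.isLt
  simp only [crossingDefect, crossing, coe_finRotate, hz, Fin.ext_iff, Fin.val_last] at h1 h2 ⊢
  grind

theorem crossingDefect_inv_last_eq {z w : Fin (n + 1)} (hz : σ (Fin.last n) = z)
    (hw : σ w = Fin.last n) (j : Fin (n + 1)) :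
    crossingDefect σ w j
      = (if ¬ (j : ℕ) < w ∧ (σ j : ℕ) < w then 1 else 0)
        - (if (j : ℕ) < w ∧ ¬ (σ j : ℕ) < w then 1 else 0)
        - (if j = Fin.last n then if (z : ℕ) < w then 1 else 0 else 0) := by
  have h1 : σ j = Fin.last n ↔ j = w := by rw [← hw, σ.injective.eq_iff]
  have h2 : σ j = z ↔ j = Fin.last n := by rw [← hz, σ.injective.eq_iff]
  have := j.isLt; have := (σ j).isLt; have := w.isLt
  simp only [crossingDefect, crossing, coe_finRotate, hw, Fin.ext_iff, Fin.val_last] at h1 h2 ⊢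
  grind

theorem sum_sum_crossingDefect : ∑ i, ∑ j, crossingDefect σ i j = 0 := by
  set w := σ⁻¹ (Fin.last n)
  have hw : σ w = Fin.last n := σ.apply_symm_apply _
  have hcol := crossingDefect_last_eq σ rfl hw
  have hrow := crossingDefect_inv_last_eq σ rfl hw
  rw [sum_sum_eq_of_eq_zero_off_cross _ w (Fin.last n)
      fun i j hi hj => crossingDefect_eq_zero σ (by rwa [Ne, ← hw, σ.injective.eq_iff]) hj,
    hrow (Fin.last n)]
  simp only [hcol, hrow, sum_add_distrib, sum_sub_distrib, σ.sum_ite_and_not_apply,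
    sum_ite_eq', mem_univ, if_true, sub_self, Fin.val_last]
  have := w.isLt
  split_ifs <;> omega

theorem cr_conj_finRotate : cr (finRotate (n + 1) * σ * (finRotate (n + 1))⁻¹) = cr σ := by
  set c := finRotate (n + 1)
  have hτ : ∀ x, (c * σ * c⁻¹) (c x) = c (σ x) := by simp
  have hsum : ∑ i, ∑ j, crossing i j ((c * σ * c⁻¹) i) ((c * σ * c⁻¹) j)
      = ∑ i, ∑ j, crossing (c i) (c j) (c (σ i)) (c (σ j)) :=
    (Fintype.sum_equiv c _ _ fun i => Fintype.sum_equiv c _ _ fun j => by rw [hτ, hτ]).symm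
  rw [← Nat.cast_inj (R := ℤ), cr_eq_sum_crossing, cr_eq_sum_crossing, hsum, ← sub_eq_zero,
    ← sum_sub_distrib]
  simp_rw [← sum_sub_distrib]
  exact sum_sum_crossingDefect σ

end Rotation

theorem wex_conj_finRotate_pow (n e : ℕ) (σ : Perm (Fin n)) :
    wex (finRotate n ^ e * σ * (finRotate n ^ e)⁻¹) = wex σ := by
  cases n with
  | zero => exact congrArg wex (Subsingleton.elim _ _)
  | succ n => exact apply_conj_pow_eq wex _ wex_conj_finRotate e σ

theorem cr_conj_finRotate_pow (n e : ℕ) (σ : Perm (Fin n)) :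
    cr (finRotate n ^ e * σ * (finRotate n ^ e)⁻¹) = cr σ := by
  cases n with
  | zero => exact congrArg cr (Subsingleton.elim _ _)
  | succ n => exact apply_conj_pow_eq cr _ cr_conj_finRotate e σ

theorem wex_permCongr_finCongr {a b : ℕ} (h : a = b) (σ : Perm (Fin a)) :
    wex ((finCongr h).permCongr σ) = wex σ := by
  subst h; rfl

theorem cr_permCongr_finCongr {a b : ℕ} (h : a = b) (σ : Perm (Fin a)) :
    cr ((finCongr h).permCongr σ) = cr σ := by
  subst h; rfl

theorem blockOf_zero (l : List ℕ) : blockOf l 0 = 0 := by simp [blockOf]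

theorem blockOf_cons (a : ℕ) (l : List ℕ) (x : ℕ) :
    blockOf (a :: l) x = (if 0 < x then 1 else 0) + blockOf l (x - a) := by
  change ((range (l.length + 1)).filter _).card = _ + ((range l.length).filter _).card
  rw [card_filter, card_filter, sum_range_succ', add_comm]
  simp only [List.take_succ_cons, List.sum_cons, List.take_zero, List.sum_nil]
  congr 1
  exact sum_congr rfl fun j _ => if_congr (by omega) rfl rfl

theorem blockOf_le_length (l : List ℕ) (x : ℕ) : blockOf l x ≤ l.length :=
  (List.length_filter_le _ _).trans (List.length_range ..).le

theorem blockOf_pos {l : List ℕ} {x : ℕ} (h0 : 0 < x) (hx : x ≤ l.sum) : 0 < blockOf l x := by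
  cases l with
  | nil => simp at hx; omega
  | cons a l => rw [blockOf_cons]; simp [h0]

theorem blockOf_of_sum_lt {l : List ℕ} {x : ℕ} (h : l.sum < x) : blockOf l x = l.length := by
  induction l generalizing x with
  | nil => rfl
  | cons a l ih =>
    rw [List.sum_cons] at h
    rw [blockOf_cons, ih (by omega), if_pos (by omega), List.length_cons, add_comm]

theorem blockOf_append_singleton (l : List ℕ) (m x : ℕ) :
    blockOf (l ++ [m]) x = blockOf l x + if l.sum < x then 1 else 0 := by
  induction l generalizing x with
  | nil => rw [List.nil_append, blockOf_cons, List.sum_nil]; exact add_comm _ _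
  | cons a l ih =>
    rw [List.cons_append, blockOf_cons, ih, blockOf_cons, List.sum_cons]
    split_ifs <;> omega

theorem blockOf_cons_succ (m : ℕ) (t : List ℕ) (i : ℕ) :
    blockOf (m :: t) (i + 1) = if i < m then 1 else 1 + blockOf t (i + 1 - m) := by
  rw [blockOf_cons, if_pos i.succ_pos]
  split_ifs with h
  · rw [Nat.sub_eq_zero_of_le h, blockOf_zero]
  · rfl

theorem blockOf_append_rotate (m : ℕ) (t : List ℕ) {i : ℕ} (hi : i < m + t.sum) :
    blockOf (t ++ [m]) ((i + t.sum) % (m + t.sum) + 1)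
      = if i < m then t.length + 1 else blockOf t (i + 1 - m) := by
  split_ifs with h
  · rw [Nat.mod_eq_of_lt (by omega), blockOf_append_singleton, blockOf_of_sum_lt (by omega),
      if_pos (by omega)]
  · rw [show i + t.sum = (i - m) + (m + t.sum) by omega, Nat.add_mod_right,
      Nat.mod_eq_of_lt (by omega), blockOf_append_singleton, if_neg (by omega),
      show i - m + 1 = i + 1 - m by omega, add_zero]

theorem blockOf_append_rotate_eq_iff (m : ℕ) (t : List ℕ) {i j : ℕ} (hi : i < m + t.sum)
    (hj : j < m + t.sum) :
    blockOf (t ++ [m]) ((i + t.sum) % (m + t.sum) + 1)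
        = blockOf (t ++ [m]) ((j + t.sum) % (m + t.sum) + 1)
      ↔ blockOf (m :: t) (i + 1) = blockOf (m :: t) (j + 1) := by
  have hbound : ∀ k < m + t.sum, m ≤ k →
      0 < blockOf t (k + 1 - m) ∧ blockOf t (k + 1 - m) ≤ t.length := fun k hk hmk =>
    ⟨blockOf_pos (by omega) (by omega), blockOf_le_length _ _⟩
  have := hbound i hi; have := hbound j hj
  rw [blockOf_append_rotate m t hi, blockOf_append_rotate m t hj, blockOf_cons_succ,
    blockOf_cons_succ]
  split_ifs <;> omega

theorem Ipoly_cons {R : Type*} [CommRing R] (y q : R) (m : ℕ) (t : List ℕ) :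
    Ipoly y q (m :: t) = Ipoly y q (t ++ [m]) := by
  have h : (m :: t).sum = (t ++ [m]).sum := by simp [add_comm]
  set d := finRotate (m :: t).sum ^ t.sum
  set e := d.trans (finCongr h)
  set Φ := (MulAut.conj d).toEquiv.trans (finCongr h).permCongr
  have hΦ : ∀ σ, Φ σ = (finCongr h).permCongr (d * σ * d⁻¹) := fun σ => rfl
  have he : ∀ x, (e x : ℕ) = (x + t.sum) % (m + t.sum) := fun x => by
    rw [Equiv.trans_apply, finCongr_apply, Fin.val_cast, coe_finRotate_pow]; rfl
  have hΦe : ∀ σ x, Φ σ (e x) = e (σ x) := fun σ x => by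
    simp only [e, hΦ, permCongr_apply, Equiv.trans_apply, symm_apply_apply, Perm.mul_apply,
      Perm.coe_inv]
  refine sum_equiv Φ (fun σ => ?_) fun σ _ => ?_
  · simp only [mem_filter, mem_univ, true_and]
    refine e.forall_congr fun x => ?_
    rw [hΦe, he, he, Ne, Ne, blockOf_append_rotate_eq_iff m t x.isLt (σ x).isLt]
  · rw [hΦ, wex_permCongr_finCongr, cr_permCongr_finCongr, wex_conj_finRotate_pow,
      cr_conj_finRotate_pow]

theorem stmt12_general (R : Type*) [CommRing R] (y q : R) (ns : List ℕ) :
    Ipoly y q ns = Ipoly y q (ns.rotate 1) := by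
  cases ns with
  | nil => rfl
  | cons m t => rw [List.rotate_cons_succ, List.rotate_zero, Ipoly_cons]

/-- `I(n_1,…,n_k)` is invariant under cyclic shift of the block sizes. -/
theorem stmt12 (R : Type*) [CommRing R] (y q : R) (ns : List ℕ)
    (hpos : ∀ m ∈ ns, 0 < m) :
    Ipoly y q ns = Ipoly y q (ns.rotate 1) :=
  stmt12_general R y q ns
end

section
/- Let N = n_1+n_2 ≤ n and γ ∈ S_n^{(n_1,n_2)} (no arcs within [1,n_1]² or [n_1+1,N]²). Write {(i,γ(i)) : i < γ(i) ≤ N} = {(i_1,j_1),…,(i_p,j_p)} and {(γ(i),i) : γ(i) < i ≤ N} = {(k_1,ℓ_1),…,(k_q,ℓ_q)}. Then the quantity |{(i,j) : i < j < γ(i) ≤ N < γ(j)}| + |{(i,j) : γ(j) < γ(i) < j ≤ N < i}| + |{i : i < γ(i) ≤ N < γ(γ(i))}| equals Σ_{r=1}^p (j_r − i_r) + Σ_{r=1}^q (ℓ_r − k_r − 1) − binomial(p+q, 2). -/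
open Finset

/-- interval points with image inside `[1,N]`, up-arc version -/
def AinF (n N : ℕ) (γ : Equiv.Perm (Fin n)) (i : Fin n) : ℕ :=
  (Finset.univ.filter fun t : Fin n =>
    (i : ℕ) < (t : ℕ) ∧ (t : ℕ) ≤ (γ i : ℕ) ∧ (γ t : ℕ) + 1 ≤ N).card

/-- interval points with image outside `[1,N]`, up-arc version -/
def AocF (n N : ℕ) (γ : Equiv.Perm (Fin n)) (i : Fin n) : ℕ :=
  (Finset.univ.filter fun t : Fin n =>
    (i : ℕ) < (t : ℕ) ∧ (t : ℕ) ≤ (γ i : ℕ) ∧ N < (γ t : ℕ) + 1).card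

/-- interval points with preimage inside `[1,N]`, down-arc version -/
def BinF (n N : ℕ) (γ : Equiv.Perm (Fin n)) (j : Fin n) : ℕ :=
  (Finset.univ.filter fun s : Fin n =>
    (γ j : ℕ) < (s : ℕ) ∧ (s : ℕ) < (j : ℕ) ∧ (γ.symm s : ℕ) + 1 ≤ N).card

/-- interval points with preimage outside `[1,N]`, down-arc version -/
def BoutF (n N : ℕ) (γ : Equiv.Perm (Fin n)) (j : Fin n) : ℕ :=
  (Finset.univ.filter fun s : Fin n =>
    (γ j : ℕ) < (s : ℕ) ∧ (s : ℕ) < (j : ℕ) ∧ N < (γ.symm s : ℕ) + 1).card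

lemma aux_sum_lt {α : Type*} [LinearOrder α] [DecidableEq α] (s : Finset α) :
    ∑ i ∈ s, (s.filter (fun t => i < t)).card = s.card.choose 2 := by
  induction s using Finset.induction_on_min with
  | empty => simp
  | insert a s ha ih =>
    have has : a ∉ s := fun h => lt_irrefl a (ha a h)
    rw [Finset.sum_insert has]
    have h1 : ((insert a s).filter (fun t => a < t)) = s := by
      rw [Finset.filter_insert, if_neg (lt_irrefl a)]
      exact Finset.filter_true_of_mem (fun x hx => ha x hx)
    have h2 : ∀ i ∈ s, ((insert a s).filter (fun t => i < t)).card
        = (s.filter (fun t => i < t)).card := by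
      intro i hi
      rw [Finset.filter_insert, if_neg (not_lt.2 (ha i hi).le)]
    rw [h1, Finset.sum_congr rfl h2, ih, Finset.card_insert_of_notMem has]
    have hc : ∀ m : ℕ, (m + 1).choose 2 = m.choose 2 + m := by
      intro m
      rw [Nat.choose_two_right, Nat.choose_two_right, Nat.triangle_succ]
    rw [hc]
    omega

lemma aux_choose_add (p q : ℕ) : (p + q).choose 2 = p.choose 2 + p * q + q.choose 2 := by
  have hc : ∀ m : ℕ, (m + 1).choose 2 = m.choose 2 + m := by
    intro m
    rw [Nat.choose_two_right, Nat.choose_two_right, Nat.triangle_succ]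
  induction q with
  | zero => simp
  | succ q ih =>
    have h1 : p + (q + 1) = (p + q) + 1 := by omega
    rw [h1, hc, hc, ih, Nat.mul_succ]
    omega

lemma aux_split {n : ℕ} (i g : Fin n) (hig : (i : ℕ) < (g : ℕ)) (P : Fin n → Prop)
    [DecidablePred P] :
    (Finset.univ.filter fun t : Fin n => (i : ℕ) < (t : ℕ) ∧ (t : ℕ) ≤ (g : ℕ) ∧ P t).card
      = (Finset.univ.filter fun t : Fin n =>
          (i : ℕ) < (t : ℕ) ∧ (t : ℕ) < (g : ℕ) ∧ P t).card
        + (if P g then 1 else 0) := by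
  by_cases hP : P g
  · rw [if_pos hP]
    have e : (Finset.univ.filter fun t : Fin n => (i : ℕ) < (t : ℕ) ∧ (t : ℕ) ≤ (g : ℕ) ∧ P t)
        = insert g (Finset.univ.filter fun t : Fin n =>
            (i : ℕ) < (t : ℕ) ∧ (t : ℕ) < (g : ℕ) ∧ P t) := by
      ext t
      simp only [Finset.mem_filter, Finset.mem_univ, true_and, Finset.mem_insert]
      constructor
      · rintro ⟨h1, h2, h3⟩
        rcases eq_or_lt_of_le h2 with h | h
        · exact Or.inl (Fin.ext h)
        · exact Or.inr ⟨h1, h, h3⟩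
      · rintro (rfl | ⟨h1, h2, h3⟩)
        · exact ⟨hig, le_refl _, hP⟩
        · exact ⟨h1, le_of_lt h2, h3⟩
    rw [e, Finset.card_insert_of_notMem (by simp)]
  · rw [if_neg hP]
    have e : (Finset.univ.filter fun t : Fin n => (i : ℕ) < (t : ℕ) ∧ (t : ℕ) ≤ (g : ℕ) ∧ P t)
        = (Finset.univ.filter fun t : Fin n =>
            (i : ℕ) < (t : ℕ) ∧ (t : ℕ) < (g : ℕ) ∧ P t) := by
      ext t
      simp only [Finset.mem_filter, Finset.mem_univ, true_and]
      constructor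
      · rintro ⟨h1, h2, h3⟩
        refine ⟨h1, lt_of_le_of_ne h2 ?_, h3⟩
        intro h
        exact hP ((Fin.ext h) ▸ h3)
      · rintro ⟨h1, h2, h3⟩
        exact ⟨h1, le_of_lt h2, h3⟩
    rw [e]
    omega

lemma aux_prod_card {n : ℕ} (P : Fin n → Fin n → Prop) [∀ i j, Decidable (P i j)] :
    (Finset.univ.filter fun p : Fin n × Fin n => P p.1 p.2).card
      = ∑ i : Fin n, (Finset.univ.filter fun j => P i j).card := by
  rw [Finset.card_filter, ← Finset.univ_product_univ, Finset.sum_product]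
  exact Finset.sum_congr rfl fun i _ => (Finset.card_filter _ _).symm

lemma aux_prod_card' {n : ℕ} (P : Fin n → Fin n → Prop) [∀ i j, Decidable (P i j)] :
    (Finset.univ.filter fun p : Fin n × Fin n => P p.1 p.2).card
      = ∑ j : Fin n, (Finset.univ.filter fun i => P i j).card := by
  rw [Finset.card_filter, ← Finset.univ_product_univ, Finset.sum_product_right]
  exact Finset.sum_congr rfl fun j _ => (Finset.card_filter _ _).symm

lemma aux_perm_card {n : ℕ} (γ : Equiv.Perm (Fin n)) (P : Fin n → Prop) [DecidablePred P] :
    (Finset.univ.filter fun i => P (γ i)).card = (Finset.univ.filter P).card := by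
  apply Finset.card_bij (fun i _ => γ i)
  · intro a ha
    simp only [Finset.mem_filter, Finset.mem_univ, true_and] at ha ⊢
    exact ha
  · intro a _ b _ h
    exact γ.injective h
  · intro b hb
    refine ⟨γ.symm b, ?_, by simp⟩
    simp only [Finset.mem_filter, Finset.mem_univ, true_and, Equiv.apply_symm_apply] at hb ⊢
    exact hb

set_option maxHeartbeats 1000000 in
/-- Lemma on the statistic `G_5`: with `N = n₁ + n₂ ≤ n` and `γ` a permutation of `[n]`
with no arcs inside `[1,n₁]²` or `[n₁+1,N]²`, the quantity
`|{(i,j) : i<j<γ(i)≤N<γ(j)}| + |{(i,j) : γ(j)<γ(i)<j≤N<i}| + |{i : i<γ(i)≤N<γ²(i)}|`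
equals `Σ_r (j_r − i_r) + Σ_r (ℓ_r − k_r − 1) − C(p+q,2)`, where `(i_r,j_r)` runs over
arcs `i < γ(i) ≤ N` (p of them) and `(k_r,ℓ_r)` over arcs `γ(i) < i ≤ N` (q of them).
Everything is written 0-indexed (1-indexed `i` is `i.val + 1`); the identity is in ℤ. -/
theorem stmt15 (n n1 n2 : ℕ) (hn1 : 0 < n1) (hn2 : 0 < n2) (hN : n1 + n2 ≤ n)
    (γ : Equiv.Perm (Fin n))
    (hγ : ∀ i : Fin n,
      ¬((i : ℕ) + 1 ≤ n1 ∧ (γ i : ℕ) + 1 ≤ n1) ∧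
      ¬(n1 < (i : ℕ) + 1 ∧ (i : ℕ) + 1 ≤ n1 + n2 ∧
        n1 < (γ i : ℕ) + 1 ∧ (γ i : ℕ) + 1 ≤ n1 + n2)) :
    ((Finset.univ.filter (fun p : Fin n × Fin n =>
        (p.1 : ℕ) < (p.2 : ℕ) ∧ (p.2 : ℕ) < (γ p.1 : ℕ) ∧
        (γ p.1 : ℕ) + 1 ≤ n1 + n2 ∧ n1 + n2 < (γ p.2 : ℕ) + 1)).card : ℤ) +
    ((Finset.univ.filter (fun p : Fin n × Fin n =>
        (γ p.2 : ℕ) < (γ p.1 : ℕ) ∧ (γ p.1 : ℕ) < (p.2 : ℕ) ∧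
        (p.2 : ℕ) + 1 ≤ n1 + n2 ∧ n1 + n2 < (p.1 : ℕ) + 1)).card : ℤ) +
    ((Finset.univ.filter (fun i : Fin n =>
        (i : ℕ) < (γ i : ℕ) ∧ (γ i : ℕ) + 1 ≤ n1 + n2 ∧
        n1 + n2 < (γ (γ i) : ℕ) + 1)).card : ℤ)
    =
    (∑ i ∈ Finset.univ.filter (fun i : Fin n =>
        (i : ℕ) < (γ i : ℕ) ∧ (γ i : ℕ) + 1 ≤ n1 + n2),
        ((γ i : ℤ) - (i : ℤ))) +
    (∑ i ∈ Finset.univ.filter (fun i : Fin n =>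
        (γ i : ℕ) < (i : ℕ) ∧ (i : ℕ) + 1 ≤ n1 + n2),
        ((i : ℤ) - (γ i : ℤ) - 1)) -
    (Nat.choose
      ((Finset.univ.filter (fun i : Fin n =>
          (i : ℕ) < (γ i : ℕ) ∧ (γ i : ℕ) + 1 ≤ n1 + n2)).card +
       (Finset.univ.filter (fun i : Fin n =>
          (γ i : ℕ) < (i : ℕ) ∧ (i : ℕ) + 1 ≤ n1 + n2)).card) 2 : ℤ) := by
  classical
  set N := n1 + n2 with hNN
  set Up := Finset.univ.filter (fun i : Fin n =>
      (i : ℕ) < (γ i : ℕ) ∧ (γ i : ℕ) + 1 ≤ N) with hUp'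
  set Dn := Finset.univ.filter (fun i : Fin n =>
      (γ i : ℕ) < (i : ℕ) ∧ (i : ℕ) + 1 ≤ N) with hDn'
  -- basic facts
  have hUpF : ∀ i ∈ Up, (i : ℕ) + 1 ≤ n1 ∧ n1 < (γ i : ℕ) + 1 ∧
      (i : ℕ) < (γ i : ℕ) ∧ (γ i : ℕ) + 1 ≤ N := by
    intro i hi
    rw [hUp', Finset.mem_filter] at hi
    have h := hγ i
    refine ⟨?_, ?_, hi.2.1, hi.2.2⟩ <;> omega
  have hDnF : ∀ j ∈ Dn, (γ j : ℕ) + 1 ≤ n1 ∧ n1 < (j : ℕ) + 1 ∧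
      (γ j : ℕ) < (j : ℕ) ∧ (j : ℕ) + 1 ≤ N := by
    intro j hj
    rw [hDn', Finset.mem_filter] at hj
    have h := hγ j
    refine ⟨?_, ?_, hj.2.1, hj.2.2⟩ <;> omega
  have hdisj : Disjoint Up Dn := by
    rw [Finset.disjoint_left]
    intro a ha hb
    rw [hUp', Finset.mem_filter] at ha
    rw [hDn', Finset.mem_filter] at hb
    omega
  have himg : ∀ (s' : Finset (Fin n)) (x : Fin n), x ∈ s'.image γ ↔ γ.symm x ∈ s' := by
    intro s' x
    simp only [Finset.mem_image]
    constructor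
    · rintro ⟨u, hu, rfl⟩
      simpa using hu
    · intro h
      exact ⟨γ.symm x, h, γ.apply_symm_apply x⟩
  -- Step 1: term1 + term3 = ∑_{i ∈ Up} AocF
  have hT1 : (Finset.univ.filter (fun p : Fin n × Fin n =>
        (p.1 : ℕ) < (p.2 : ℕ) ∧ (p.2 : ℕ) < (γ p.1 : ℕ) ∧
        (γ p.1 : ℕ) + 1 ≤ N ∧ N < (γ p.2 : ℕ) + 1)).card
      = ∑ i ∈ Up, (Finset.univ.filter fun t : Fin n =>
          (i : ℕ) < (t : ℕ) ∧ (t : ℕ) < (γ i : ℕ) ∧ N < (γ t : ℕ) + 1).card := by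
    rw [aux_prod_card (fun i t : Fin n =>
      (i : ℕ) < (t : ℕ) ∧ (t : ℕ) < (γ i : ℕ) ∧
      (γ i : ℕ) + 1 ≤ N ∧ N < (γ t : ℕ) + 1)]
    rw [← Finset.sum_subset (Finset.subset_univ Up) ?van1]
    case van1 =>
      intro i _ hiU
      rw [hUp', Finset.mem_filter] at hiU
      rw [Finset.card_eq_zero, Finset.filter_eq_empty_iff]
      intro t _
      rintro ⟨h1, h2, h3, h4⟩
      exact hiU ⟨Finset.mem_univ _, by omega, h3⟩
    apply Finset.sum_congr rfl
    intro i hi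
    rw [hUp', Finset.mem_filter] at hi
    congr 1
    apply Finset.filter_congr
    intro t _
    constructor
    · rintro ⟨h1, h2, _, h4⟩
      exact ⟨h1, h2, h4⟩
    · rintro ⟨h1, h2, h4⟩
      exact ⟨h1, h2, hi.2.2, h4⟩
  have hT3 : (Finset.univ.filter (fun i : Fin n =>
        (i : ℕ) < (γ i : ℕ) ∧ (γ i : ℕ) + 1 ≤ N ∧ N < (γ (γ i) : ℕ) + 1)).card
      = ∑ i ∈ Up, (if N < (γ (γ i) : ℕ) + 1 then 1 else 0) := by
    rw [Finset.card_filter]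
    rw [← Finset.sum_subset (Finset.subset_univ Up) ?van3]
    case van3 =>
      intro i _ hiU
      rw [hUp', Finset.mem_filter] at hiU
      rw [if_neg]
      rintro ⟨h1, h2, h3⟩
      exact hiU ⟨Finset.mem_univ _, h1, h2⟩
    apply Finset.sum_congr rfl
    intro i hi
    rw [hUp', Finset.mem_filter] at hi
    rw [if_congr (Iff.intro (fun h => h.2.2) (fun h => ⟨hi.2.1, hi.2.2, h⟩)) rfl rfl]
  have key1 : (Finset.univ.filter (fun p : Fin n × Fin n =>
        (p.1 : ℕ) < (p.2 : ℕ) ∧ (p.2 : ℕ) < (γ p.1 : ℕ) ∧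
        (γ p.1 : ℕ) + 1 ≤ N ∧ N < (γ p.2 : ℕ) + 1)).card
      + (Finset.univ.filter (fun i : Fin n =>
        (i : ℕ) < (γ i : ℕ) ∧ (γ i : ℕ) + 1 ≤ N ∧ N < (γ (γ i) : ℕ) + 1)).card
      = ∑ i ∈ Up, AocF n N γ i := by
    rw [hT1, hT3, ← Finset.sum_add_distrib]
    apply Finset.sum_congr rfl
    intro i hi
    exact (aux_split i (γ i) (hUpF i hi).2.2.1 (fun t => N < (γ t : ℕ) + 1)).symm
  -- Step 2: term2 = ∑_{j ∈ Dn} BoutF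
  have key2 : (Finset.univ.filter (fun p : Fin n × Fin n =>
        (γ p.2 : ℕ) < (γ p.1 : ℕ) ∧ (γ p.1 : ℕ) < (p.2 : ℕ) ∧
        (p.2 : ℕ) + 1 ≤ N ∧ N < (p.1 : ℕ) + 1)).card
      = ∑ j ∈ Dn, BoutF n N γ j := by
    rw [aux_prod_card' (fun i j : Fin n =>
      (γ j : ℕ) < (γ i : ℕ) ∧ (γ i : ℕ) < (j : ℕ) ∧
      (j : ℕ) + 1 ≤ N ∧ N < (i : ℕ) + 1)]
    rw [← Finset.sum_subset (Finset.subset_univ Dn) ?van2]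
    case van2 =>
      intro j _ hjD
      rw [hDn', Finset.mem_filter] at hjD
      rw [Finset.card_eq_zero, Finset.filter_eq_empty_iff]
      intro i _
      rintro ⟨h1, h2, h3, h4⟩
      exact hjD ⟨Finset.mem_univ _, by omega, h3⟩
    apply Finset.sum_congr rfl
    intro j hj
    rw [hDn', Finset.mem_filter] at hj
    have e : (Finset.univ.filter fun i : Fin n =>
          (γ j : ℕ) < (γ i : ℕ) ∧ (γ i : ℕ) < (j : ℕ) ∧
          (j : ℕ) + 1 ≤ N ∧ N < (i : ℕ) + 1)
        = (Finset.univ.filter fun i : Fin n =>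
          (γ j : ℕ) < (γ i : ℕ) ∧ (γ i : ℕ) < (j : ℕ) ∧ N < ((γ.symm (γ i)) : ℕ) + 1) := by
      apply Finset.filter_congr
      intro i _
      rw [Equiv.symm_apply_apply]
      constructor
      · rintro ⟨a, b, _, d⟩
        exact ⟨a, b, d⟩
      · rintro ⟨a, b, d⟩
        exact ⟨a, b, hj.2.2, d⟩
    rw [e]
    exact aux_perm_card γ (fun s : Fin n =>
      (γ j : ℕ) < (s : ℕ) ∧ (s : ℕ) < (j : ℕ) ∧ N < ((γ.symm s) : ℕ) + 1)
  -- Step 3: per-arc interval splits (RHS sums)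
  have hA : ∑ i ∈ Up, ((γ i : ℤ) - (i : ℤ))
      = ((∑ i ∈ Up, AinF n N γ i : ℕ) : ℤ) + ((∑ i ∈ Up, AocF n N γ i : ℕ) : ℤ) := by
    rw [Nat.cast_sum, Nat.cast_sum, ← Finset.sum_add_distrib]
    apply Finset.sum_congr rfl
    intro i hi
    have hf := hUpF i hi
    have hioc : (Finset.univ.filter fun t : Fin n =>
        (i : ℕ) < (t : ℕ) ∧ (t : ℕ) ≤ (γ i : ℕ)).card = (γ i : ℕ) - (i : ℕ) := by
      have e : (Finset.univ.filter fun t : Fin n =>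
          (i : ℕ) < (t : ℕ) ∧ (t : ℕ) ≤ (γ i : ℕ)) = Finset.Ioc i (γ i) := by
        ext t
        simp only [Finset.mem_filter, Finset.mem_univ, true_and, Finset.mem_Ioc,
          Fin.lt_def, Fin.le_def]
      rw [e, Fin.card_Ioc]
    have e1 : (Finset.univ.filter fun t : Fin n =>
          (i : ℕ) < (t : ℕ) ∧ (t : ℕ) ≤ (γ i : ℕ) ∧ (γ t : ℕ) + 1 ≤ N)
        = (Finset.univ.filter fun t : Fin n =>
          (i : ℕ) < (t : ℕ) ∧ (t : ℕ) ≤ (γ i : ℕ)).filter (fun t => (γ t : ℕ) + 1 ≤ N) := by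
      rw [Finset.filter_filter]
      exact Finset.filter_congr fun t _ => by tauto
    have e2 : (Finset.univ.filter fun t : Fin n =>
          (i : ℕ) < (t : ℕ) ∧ (t : ℕ) ≤ (γ i : ℕ) ∧ N < (γ t : ℕ) + 1)
        = (Finset.univ.filter fun t : Fin n =>
          (i : ℕ) < (t : ℕ) ∧ (t : ℕ) ≤ (γ i : ℕ)).filter (fun t => ¬((γ t : ℕ) + 1 ≤ N)) := by
      rw [Finset.filter_filter]
      exact Finset.filter_congr fun t _ => by omega
    have h1 : AinF n N γ i + AocF n N γ i = (γ i : ℕ) - (i : ℕ) := by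
      unfold AinF AocF
      rw [e1, e2, Finset.card_filter_add_card_filter_not, hioc]
    have h2 := hf.2.2.1
    omega
  have hB : ∑ j ∈ Dn, ((j : ℤ) - (γ j : ℤ) - 1)
      = ((∑ j ∈ Dn, BinF n N γ j : ℕ) : ℤ) + ((∑ j ∈ Dn, BoutF n N γ j : ℕ) : ℤ) := by
    rw [Nat.cast_sum, Nat.cast_sum, ← Finset.sum_add_distrib]
    apply Finset.sum_congr rfl
    intro j hj
    have hg := hDnF j hj
    have hioo : (Finset.univ.filter fun s : Fin n =>
        (γ j : ℕ) < (s : ℕ) ∧ (s : ℕ) < (j : ℕ)).card = (j : ℕ) - (γ j : ℕ) - 1 := by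
      have e : (Finset.univ.filter fun s : Fin n =>
          (γ j : ℕ) < (s : ℕ) ∧ (s : ℕ) < (j : ℕ)) = Finset.Ioo (γ j) j := by
        ext s
        simp only [Finset.mem_filter, Finset.mem_univ, true_and, Finset.mem_Ioo,
          Fin.lt_def]
      rw [e, Fin.card_Ioo]
    have e1 : (Finset.univ.filter fun s : Fin n =>
          (γ j : ℕ) < (s : ℕ) ∧ (s : ℕ) < (j : ℕ) ∧ (γ.symm s : ℕ) + 1 ≤ N)
        = (Finset.univ.filter fun s : Fin n =>
          (γ j : ℕ) < (s : ℕ) ∧ (s : ℕ) < (j : ℕ)).filter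
            (fun s => (γ.symm s : ℕ) + 1 ≤ N) := by
      rw [Finset.filter_filter]
      exact Finset.filter_congr fun s _ => by tauto
    have e2 : (Finset.univ.filter fun s : Fin n =>
          (γ j : ℕ) < (s : ℕ) ∧ (s : ℕ) < (j : ℕ) ∧ N < (γ.symm s : ℕ) + 1)
        = (Finset.univ.filter fun s : Fin n =>
          (γ j : ℕ) < (s : ℕ) ∧ (s : ℕ) < (j : ℕ)).filter
            (fun s => ¬((γ.symm s : ℕ) + 1 ≤ N)) := by
      rw [Finset.filter_filter]
      exact Finset.filter_congr fun s _ => by omega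
    have h1 : BinF n N γ j + BoutF n N γ j = (j : ℕ) - (γ j : ℕ) - 1 := by
      unfold BinF BoutF
      rw [e1, e2, Finset.card_filter_add_card_filter_not, hioo]
    have h2 := hg.2.2.1
    omega
  -- Step 4: inside counts total C(p+q,2)
  have eqAin : ∀ i ∈ Up, AinF n N γ i
      = (Up.filter fun t => i < t).card + (Dn.filter fun t => t ≤ γ i).card := by
    intro i hi
    have hf := hUpF i hi
    have e : (Finset.univ.filter fun t : Fin n =>
          (i : ℕ) < (t : ℕ) ∧ (t : ℕ) ≤ (γ i : ℕ) ∧ (γ t : ℕ) + 1 ≤ N)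
        = (Up.filter fun t => i < t) ∪ (Dn.filter fun t => t ≤ γ i) := by
      ext t
      have hgt := hγ t
      simp only [hUp', hDn', Finset.mem_union, Finset.mem_filter, Finset.mem_univ,
        true_and, Fin.lt_def, Fin.le_def]
      omega
    unfold AinF
    rw [e, Finset.card_union_of_disjoint
      (hdisj.mono (Finset.filter_subset _ _) (Finset.filter_subset _ _))]
  have eqBin : ∀ j ∈ Dn, BinF n N γ j
      = (Up.filter fun u => γ u < j).card + (Dn.filter fun u => γ j < γ u).card := by
    intro j hj
    have hg := hDnF j hj
    have hdisjimg : Disjoint (Up.image γ) (Dn.image γ) := by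
      rw [Finset.disjoint_left]
      intro x hx hy
      rw [himg] at hx hy
      exact Finset.disjoint_left.1 hdisj hx hy
    have e : (Finset.univ.filter fun s : Fin n =>
          (γ j : ℕ) < (s : ℕ) ∧ (s : ℕ) < (j : ℕ) ∧ (γ.symm s : ℕ) + 1 ≤ N)
        = ((Up.image γ).filter fun s => s < j) ∪ ((Dn.image γ).filter fun s => γ j < s) := by
      ext s
      have hgu := hγ (γ.symm s)
      rw [Equiv.apply_symm_apply] at hgu
      simp only [hUp', hDn', Finset.mem_union, Finset.mem_filter, himg,
        Finset.mem_univ, true_and, Fin.lt_def, Fin.le_def, Equiv.apply_symm_apply]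
      omega
    unfold BinF
    rw [e, Finset.card_union_of_disjoint
      (hdisjimg.mono (Finset.filter_subset _ _) (Finset.filter_subset _ _))]
    simp only [Finset.filter_image, Finset.card_image_of_injective _ γ.injective]
  have hs1 : ∑ i ∈ Up, (Up.filter fun t => i < t).card = Up.card.choose 2 := aux_sum_lt Up
  have hs4 : ∑ j ∈ Dn, (Dn.filter fun u => γ j < γ u).card = Dn.card.choose 2 := by
    have e : ∀ j : Fin n, (Dn.filter fun u => γ j < γ u).card
        = ((Dn.image γ).filter fun v => γ j < v).card := by
      intro j
      rw [Finset.filter_image, Finset.card_image_of_injective _ γ.injective]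
    have hsi : ∑ v ∈ Dn.image γ, ((Dn.image γ).filter fun w => v < w).card
        = ∑ j ∈ Dn, ((Dn.image γ).filter fun v => γ j < v).card :=
      Finset.sum_image (fun x _ y _ h => γ.injective h)
    calc ∑ j ∈ Dn, (Dn.filter fun u => γ j < γ u).card
        = ∑ j ∈ Dn, ((Dn.image γ).filter fun v => γ j < v).card :=
          Finset.sum_congr rfl (fun j _ => e j)
      _ = ∑ v ∈ Dn.image γ, ((Dn.image γ).filter fun w => v < w).card := hsi.symm
      _ = (Dn.image γ).card.choose 2 := aux_sum_lt _
      _ = Dn.card.choose 2 := by rw [Finset.card_image_of_injective _ γ.injective]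
  have hmix : (∑ i ∈ Up, (Dn.filter fun t => t ≤ γ i).card)
      + (∑ j ∈ Dn, (Up.filter fun u => γ u < j).card) = Up.card * Dn.card := by
    simp only [Finset.card_filter]
    rw [Finset.sum_comm (s := Dn) (t := Up)]
    rw [← Finset.sum_add_distrib]
    have e : ∀ i ∈ Up, ((∑ t ∈ Dn, if t ≤ γ i then 1 else 0)
        + ∑ t ∈ Dn, if γ i < t then 1 else 0) = Dn.card := by
      intro i _
      rw [← Finset.sum_add_distrib]
      have e2 : ∀ t ∈ Dn, ((if t ≤ γ i then 1 else 0) + if γ i < t then 1 else 0) = 1 := by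
        intro t _
        rcases le_or_gt t (γ i) with h | h
        · rw [if_pos h, if_neg (not_lt.2 h)]
        · rw [if_neg (not_le.2 h), if_pos h]
      rw [Finset.sum_congr rfl e2, Finset.sum_const, smul_eq_mul, mul_one]
    rw [Finset.sum_congr rfl e, Finset.sum_const, smul_eq_mul]
  have key6 : (∑ i ∈ Up, AinF n N γ i) + (∑ j ∈ Dn, BinF n N γ j)
      = (Up.card + Dn.card).choose 2 := by
    rw [Finset.sum_congr rfl eqAin, Finset.sum_congr rfl eqBin,
      Finset.sum_add_distrib, Finset.sum_add_distrib, hs1, hs4, aux_choose_add]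
    omega
  -- final assembly
  have k1 : ((Finset.univ.filter (fun p : Fin n × Fin n =>
        (p.1 : ℕ) < (p.2 : ℕ) ∧ (p.2 : ℕ) < (γ p.1 : ℕ) ∧
        (γ p.1 : ℕ) + 1 ≤ N ∧ N < (γ p.2 : ℕ) + 1)).card : ℤ)
      + ((Finset.univ.filter (fun i : Fin n =>
        (i : ℕ) < (γ i : ℕ) ∧ (γ i : ℕ) + 1 ≤ N ∧ N < (γ (γ i) : ℕ) + 1)).card : ℤ)
      = ((∑ i ∈ Up, AocF n N γ i : ℕ) : ℤ) := by exact_mod_cast key1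
  have k2 : ((Finset.univ.filter (fun p : Fin n × Fin n =>
        (γ p.2 : ℕ) < (γ p.1 : ℕ) ∧ (γ p.1 : ℕ) < (p.2 : ℕ) ∧
        (p.2 : ℕ) + 1 ≤ N ∧ N < (p.1 : ℕ) + 1)).card : ℤ)
      = ((∑ j ∈ Dn, BoutF n N γ j : ℕ) : ℤ) := by exact_mod_cast key2
  have k6 : ((∑ i ∈ Up, AinF n N γ i : ℕ) : ℤ) + ((∑ j ∈ Dn, BinF n N γ j : ℕ) : ℤ)
      = ((Up.card + Dn.card).choose 2 : ℤ) := by exact_mod_cast key6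
  rw [hA, hB]
  linarith [k1, k2, k6]
end
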